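/- In the errors-in-variables model, suppose E|X|^j < ∞, E|U|^j < ∞ for all 0 ≤ j ≤ J, E|g(X)|·(1+|X|+|U|)^J is integrable, and E|ε|·(1+|X|+|U|)^J is integrable. With ν_k = E(U^k) (so ν_0 = 1), for every 0 ≤ j ≤ J one has E(Y X^j) = Σ_{k=0}^{j} C(j,k) · E(Y W^{j−k}) · P_k(ν_0, …, ν_k). -/

import Mathlib

open MeasureTheory ProbabilityTheory Filter

/-!
Expanding `W ^ n = (X + U) ^ n` binomially, the noise terms vanish because `E(ε | X, U) = 0`, and
independence of `X` and `U` factors the remaining ones, so `E(Y W^n) = ∑ C(n,i) E(Y X^i) ν_{n-i}`: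
the moments `E(Y W^·)` are the binomial convolution of `E(Y X^·)` with `ν`. Binomial convolution
is multiplication of exponential generating functions, and the recursion defining `P` says that
`(P_k(ν))_k` is the inverse of `ν` for it; convolving with `P(ν)` therefore recovers `E(Y X^j)`.
-/

section BinomialConvolution

variable {K : Type*} [Field K]

def binomialConv (f g : ℕ → K) (n : ℕ) : K :=
  ∑ k ∈ Finset.range (n + 1), (n.choose k : K) * f k * g (n - k)

def egf (f : ℕ → K) : PowerSeries K :=
  PowerSeries.mk fun n => f n / n.factorial

theorem binomialConv_congr_right {f g g' : ℕ → K} {n : ℕ} (h : ∀ m ≤ n, g m = g' m) :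
    binomialConv f g n = binomialConv f g' n :=
  Finset.sum_congr rfl fun k _ => by rw [h _ (Nat.sub_le n k)]

theorem binomialConv_eq_ite_of_recursion {P : ℕ → (ℕ → K) → K} {x : ℕ → K} (hx0 : x 0 ≠ 0)
    (hP0 : P 0 x = (x 0)⁻¹)
    (hPrec : ∀ j : ℕ, 1 ≤ j →
      x 0 * P j x = -∑ k ∈ Finset.range j, (j.choose k : K) * x (j - k) * P k x) (n : ℕ) :
    binomialConv (fun k => P k x) x n = if n = 0 then 1 else 0 := by
  rcases n with _ | n
  · simp [binomialConv, hP0, hx0]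
  · have := hPrec (n + 1) (Nat.le_add_left 1 n)
    rw [binomialConv, Finset.sum_range_succ]
    simp only [Nat.choose_self, Nat.cast_one, Nat.sub_self, one_mul, Nat.add_one_ne_zero, if_false]
    rw [Finset.sum_congr rfl fun k _ => mul_right_comm _ _ _]
    linear_combination this

variable [CharZero K]

theorem egf_injective : Function.Injective (egf : (ℕ → K) → PowerSeries K) := by
  intro f g h
  funext n
  have := congrArg (PowerSeries.coeff n) h
  simpa [egf, div_left_inj' (Nat.cast_ne_zero.mpr n.factorial_ne_zero : (n.factorial : K) ≠ 0)]
    using this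

theorem egf_binomialConv (f g : ℕ → K) : egf (binomialConv f g) = egf f * egf g := by
  ext n
  rw [PowerSeries.coeff_mul, Finset.Nat.sum_antidiagonal_eq_sum_range_succ_mk]
  simp only [egf, binomialConv, PowerSeries.coeff_mk, Finset.sum_div]
  refine Finset.sum_congr rfl fun k hk => ?_
  rw [Nat.cast_choose K (Nat.lt_succ_iff.mp (Finset.mem_range.mp hk))]
  have := (Nat.cast_ne_zero (R := K)).mpr n.factorial_ne_zero
  field_simp

theorem egf_ite_eq_one : egf (fun n => if n = 0 then 1 else 0) = (1 : PowerSeries K) := by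
  ext n
  rcases n with _ | n <;> simp [egf, PowerSeries.coeff_one]

theorem binomialConv_binomialConv_of_inverse {ν Q : ℕ → K}
    (hQ : ∀ n, binomialConv Q ν n = if n = 0 then 1 else 0) (b : ℕ → K) :
    binomialConv Q (binomialConv b ν) = b := by
  apply egf_injective
  rw [egf_binomialConv, egf_binomialConv, mul_left_comm, ← egf_binomialConv, funext hQ,
    egf_ite_eq_one, mul_one]

end BinomialConvolution

theorem abs_pow_mul_pow_le_one_add_abs_add_abs_pow (x u : ℝ) {i l J : ℕ} (h : i + l ≤ J) :
    |x ^ i * u ^ l| ≤ (1 + |x| + |u|) ^ J := by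
  have hx : |x| ≤ 1 + |x| + |u| := by linarith [abs_nonneg u]
  have hu : |u| ≤ 1 + |x| + |u| := by linarith [abs_nonneg x]
  calc |x ^ i * u ^ l| = |x| ^ i * |u| ^ l := by rw [abs_mul, abs_pow, abs_pow]
    _ ≤ (1 + |x| + |u|) ^ i * (1 + |x| + |u|) ^ l := by gcongr
    _ = (1 + |x| + |u|) ^ (i + l) := (pow_add _ i l).symm
    _ ≤ (1 + |x| + |u|) ^ J := pow_le_pow_right₀ (by linarith [abs_nonneg x, abs_nonneg u]) h

section Moments

variable {Ω : Type*} [mΩ : MeasurableSpace Ω] {μ : Measure Ω}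

theorem integrable_mul_pow_mul_pow {Z X U : Ω → ℝ} {J i l : ℕ} (hZ : AEStronglyMeasurable Z μ)
    (hX : AEStronglyMeasurable X μ) (hU : AEStronglyMeasurable U μ)
    (hint : Integrable (fun ω => |Z ω| * (1 + |X ω| + |U ω|) ^ J) μ) (h : i + l ≤ J) :
    Integrable (fun ω => Z ω * (X ω ^ i * U ω ^ l)) μ := by
  refine hint.mono (hZ.mul ((hX.pow i).mul (hU.pow l))) (ae_of_all _ fun ω => ?_)
  calc ‖Z ω * (X ω ^ i * U ω ^ l)‖ = |Z ω| * |X ω ^ i * U ω ^ l| := by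
        rw [Real.norm_eq_abs, abs_mul]
    _ ≤ |Z ω| * (1 + |X ω| + |U ω|) ^ J := by
        gcongr; exact abs_pow_mul_pow_le_one_add_abs_add_abs_pow _ _ h
    _ ≤ ‖|Z ω| * (1 + |X ω| + |U ω|) ^ J‖ := Real.le_norm_self _

theorem integral_mul_eq_zero_of_condExp_eq_zero {m : MeasurableSpace Ω} (hm : m ≤ mΩ)
    [SigmaFinite (μ.trim hm)] {f h : Ω → ℝ} (hf : Integrable f μ) (hcond : μ[f | m] =ᵐ[μ] 0)
    (hh : StronglyMeasurable[m] h) (hhf : Integrable (h * f) μ) :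
    ∫ ω, h ω * f ω ∂μ = 0 := by
  have hpull : μ[h * f | m] =ᵐ[μ] 0 := by
    filter_upwards [condExp_mul_of_stronglyMeasurable_left hh hhf hf, hcond] with ω h₁ h₂
    simp only [h₁, Pi.mul_apply, h₂, Pi.zero_apply, mul_zero]
  rw [← Pi.mul_def, ← integral_condExp hm, integral_congr_ae hpull]
  simp

theorem integral_mul_add_pow_eq_binomialConv {Y X U : Ω → ℝ} {c ν : ℕ → ℝ} {n : ℕ}
    (hint : ∀ i l, i + l ≤ n → Integrable (fun ω => Y ω * (X ω ^ i * U ω ^ l)) μ)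
    (hfac : ∀ i l, i + l ≤ n → ∫ ω, Y ω * (X ω ^ i * U ω ^ l) ∂μ = c i * ν l) (hν0 : ν 0 = 1) :
    ∫ ω, Y ω * (X ω + U ω) ^ n ∂μ = binomialConv (fun i => ∫ ω, Y ω * X ω ^ i ∂μ) ν n := by
  have hmoment : ∀ i ≤ n, ∫ ω, Y ω * X ω ^ i ∂μ = c i := fun i hi => by
    simpa [hν0] using hfac i 0 (by omega)
  have hexpand : ∀ ω, Y ω * (X ω + U ω) ^ n
      = ∑ i ∈ Finset.range (n + 1), Y ω * (X ω ^ i * U ω ^ (n - i)) * (n.choose i : ℝ) := by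
    intro ω
    rw [add_pow, Finset.mul_sum]
    exact Finset.sum_congr rfl fun i _ => by ring
  simp_rw [hexpand]
  rw [integral_finsetSum _ fun i hi => (hint i (n - i) (by simp at hi; omega)).mul_const _]
  refine Finset.sum_congr rfl fun i hi => ?_
  have hi : i ≤ n := Nat.lt_succ_iff.mp (Finset.mem_range.mp hi)
  beta_reduce
  rw [integral_mul_const, hfac i (n - i) (by omega), hmoment i hi]
  ring

theorem integral_comp_add_mul_pow_mul_pow_eq [IsFiniteMeasure μ] {X U ε : Ω → ℝ} {g : ℝ → ℝ}
    {J i l : ℕ} (hX : Measurable X) (hU : Measurable U) (hε : AEStronglyMeasurable ε μ)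
    (hg : Measurable g) (hindep : IndepFun X U μ)
    (hcond : μ[ε | MeasurableSpace.comap (fun ω => (X ω, U ω)) inferInstance] =ᵐ[μ] 0)
    (hgint : Integrable (fun ω => |g (X ω)| * (1 + |X ω| + |U ω|) ^ J) μ)
    (hεint : Integrable (fun ω => |ε ω| * (1 + |X ω| + |U ω|) ^ J) μ) (h : i + l ≤ J) :
    ∫ ω, (g (X ω) + ε ω) * (X ω ^ i * U ω ^ l) ∂μ
      = (∫ ω, g (X ω) * X ω ^ i ∂μ) * ∫ ω, U ω ^ l ∂μ := by
  have hgX : AEStronglyMeasurable (fun ω => g (X ω)) μ := (hg.comp hX).aestronglyMeasurable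
  have hsignal := integrable_mul_pow_mul_pow hgX hX.aestronglyMeasurable hU.aestronglyMeasurable
    hgint h
  have hnoise := integrable_mul_pow_mul_pow hε hX.aestronglyMeasurable hU.aestronglyMeasurable
    hεint h
  have hnoise_zero : ∫ ω, ε ω * (X ω ^ i * U ω ^ l) ∂μ = 0 := by
    have hε₁ : Integrable ε μ := by
      simpa using integrable_mul_pow_mul_pow hε hX.aestronglyMeasurable hU.aestronglyMeasurable
        hεint (i := 0) (l := 0) (Nat.zero_le J)
    have hXU := comap_measurable (m := inferInstance) fun ω => (X ω, U ω)
    simp_rw [mul_comm (ε _)]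
    refine integral_mul_eq_zero_of_condExp_eq_zero (hX.prodMk hU).comap_le hε₁ hcond
      (((measurable_fst.pow_const i).mul (measurable_snd.pow_const l)).comp hXU).stronglyMeasurable
      (by simpa only [Pi.mul_def, mul_comm (ε _)] using hnoise)
  have hfactor : ∫ ω, g (X ω) * (X ω ^ i * U ω ^ l) ∂μ
      = (∫ ω, g (X ω) * X ω ^ i ∂μ) * ∫ ω, U ω ^ l ∂μ := by
    simp_rw [← mul_assoc]
    exact (hindep.comp (hg.mul (measurable_id.pow_const i)) (measurable_id.pow_const l)
      ).integral_fun_mul_eq_mul_integral (hgX.mul (hX.aestronglyMeasurable.pow i))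
      (hU.aestronglyMeasurable.pow l)
  simp_rw [add_mul]
  rw [integral_add hsignal hnoise, hnoise_zero, add_zero, hfactor]

end Moments

theorem statement1_general
    {Ω : Type*} [MeasureSpace Ω] [IsProbabilityMeasure (ℙ : Measure Ω)]
    (J : ℕ) (X U ε : Ω → ℝ) (g : ℝ → ℝ)
    (hX : Measurable X) (hU : Measurable U) (hε : Measurable ε) (hg : Measurable g)
    (hindep : IndepFun X U ℙ)
    (hcond : ℙ[ε | MeasurableSpace.comap (fun ω => (X ω, U ω)) inferInstance] =ᵐ[ℙ] 0)
    (hgint : Integrable (fun ω => |g (X ω)| * (1 + |X ω| + |U ω|) ^ J) ℙ)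
    (hεint : Integrable (fun ω => |ε ω| * (1 + |X ω| + |U ω|) ^ J) ℙ)
    (Y W : Ω → ℝ) (hY : ∀ ω, Y ω = g (X ω) + ε ω) (hW : ∀ ω, W ω = X ω + U ω)
    (ν : ℕ → ℝ) (hν : ∀ k, ν k = ∫ ω, (U ω) ^ k ∂ℙ)
    (P : ℕ → (ℕ → ℝ) → ℝ)
    (hP0 : ∀ x : ℕ → ℝ, P 0 x = (x 0)⁻¹)
    (hPrec : ∀ j : ℕ, 1 ≤ j → ∀ x : ℕ → ℝ,
      x 0 * P j x = -∑ k ∈ Finset.range j, (j.choose k : ℝ) * x (j - k) * P k x) :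
    ∀ j ≤ J, (∫ ω, Y ω * (X ω) ^ j ∂ℙ)
      = ∑ k ∈ Finset.range (j + 1),
          (j.choose k : ℝ) * (∫ ω, Y ω * (W ω) ^ (j - k) ∂ℙ) * P k ν := by
  intro j hj
  obtain rfl : Y = fun ω => g (X ω) + ε ω := funext hY
  obtain rfl : W = fun ω => X ω + U ω := funext hW
  have hν0 : ν 0 = 1 := by simp [hν]
  have hmoments : ∀ n ≤ J, ∫ ω, (g (X ω) + ε ω) * (X ω + U ω) ^ n
      = binomialConv (fun i => ∫ ω, (g (X ω) + ε ω) * X ω ^ i) ν n := fun n hn =>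
    integral_mul_add_pow_eq_binomialConv
      (fun i l hil =>
        ((integrable_mul_pow_mul_pow (hg.comp hX).aestronglyMeasurable hX.aestronglyMeasurable
            hU.aestronglyMeasurable hgint (hil.trans hn)).add
          (integrable_mul_pow_mul_pow hε.aestronglyMeasurable hX.aestronglyMeasurable
            hU.aestronglyMeasurable hεint (hil.trans hn))).congr
          (ae_of_all _ fun ω => (add_mul _ _ _).symm))
      (fun i l hil => by
        rw [hν, integral_comp_add_mul_pow_mul_pow_eq hX hU hε.aestronglyMeasurable hg hindep hcond
          hgint hεint (hil.trans hn)])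
      hν0
  have hinverse := binomialConv_binomialConv_of_inverse
    (binomialConv_eq_ite_of_recursion (hν0 ▸ one_ne_zero) (hP0 ν) fun n hn => hPrec n hn ν)
    (fun i => ∫ ω, (g (X ω) + ε ω) * X ω ^ i)
  calc ∫ ω, (g (X ω) + ε ω) * X ω ^ j
      = binomialConv (fun k => P k ν)
          (binomialConv (fun i => ∫ ω, (g (X ω) + ε ω) * X ω ^ i) ν) j := by rw [hinverse]
    _ = binomialConv (fun k => P k ν) (fun n => ∫ ω, (g (X ω) + ε ω) * (X ω + U ω) ^ n) j :=
        binomialConv_congr_right fun m hm => (hmoments m (hm.trans hj)).symm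
    _ = _ := Finset.sum_congr rfl fun k _ => mul_right_comm _ _ _

/-- In the errors-in-variables model `Y = g(X) + ε`, `W = X + U`,
with `U` independent of `X` and `E(ε | U, X) = 0`, under the stated moment
conditions, `E(Y X^j) = ∑_{k=0}^{j} C(j,k) E(Y W^{j-k}) P_k(ν_0, …, ν_k)`
for all `j ≤ J`, where `ν_k = E(U^k)` and the `P_j` satisfy the recursion
`P_0(x_0) = x_0⁻¹`, `x_0 P_j(x_0,…,x_j) = -∑_{k<j} C(j,k) x_{j-k} P_k(x_0,…,x_k)`. -/
theorem statement1
    {Ω : Type*} [MeasureSpace Ω] [IsProbabilityMeasure (ℙ : Measure Ω)]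
    (J : ℕ) (X U ε : Ω → ℝ) (g : ℝ → ℝ)
    (hX : Measurable X) (hU : Measurable U) (hε : Measurable ε) (hg : Measurable g)
    (hindep : IndepFun X U ℙ)
    (hcond : ℙ[ε | MeasurableSpace.comap (fun ω => (X ω, U ω)) inferInstance] =ᵐ[ℙ] 0)
    (hXmom : ∀ j ≤ J, Integrable (fun ω => |X ω| ^ j) ℙ)
    (hUmom : ∀ j ≤ J, Integrable (fun ω => |U ω| ^ j) ℙ)
    (hgint : Integrable (fun ω => |g (X ω)| * (1 + |X ω| + |U ω|) ^ J) ℙ)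
    (hεint : Integrable (fun ω => |ε ω| * (1 + |X ω| + |U ω|) ^ J) ℙ)
    (Y W : Ω → ℝ) (hY : ∀ ω, Y ω = g (X ω) + ε ω) (hW : ∀ ω, W ω = X ω + U ω)
    (ν : ℕ → ℝ) (hν : ∀ k, ν k = ∫ ω, (U ω) ^ k ∂ℙ)
    (P : ℕ → (ℕ → ℝ) → ℝ)
    (hP0 : ∀ x : ℕ → ℝ, P 0 x = (x 0)⁻¹)
    (hPrec : ∀ j : ℕ, 1 ≤ j → ∀ x : ℕ → ℝ,
      x 0 * P j x = -∑ k ∈ Finset.range j, (j.choose k : ℝ) * x (j - k) * P k x) :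
    ∀ j ≤ J, (∫ ω, Y ω * (X ω) ^ j ∂ℙ)
      = ∑ k ∈ Finset.range (j + 1),
          (j.choose k : ℝ) * (∫ ω, Y ω * (W ω) ^ (j - k) ∂ℙ) * P k ν :=
  statement1_general J X U ε g hX hU hε hg hindep hcond hgint hεint Y W hY hW ν hν P hP0 hPrec
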